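/- arXiv:1712.00100 — 5 statements merged into one kernel-verified Lean document; each statement's English description precedes it below -/
import Mathlib

section
/- Let R be an s×s real symmetric positive definite matrix, K an n×n real symmetric positive semidefinite matrix, A an n×n real matrix and B an n×s real matrix, and set V = (R + BᵀKB)⁻¹BᵀKA and Λ = AᵀKB(R + BᵀKB)⁻¹BᵀKA. Then for every x ∈ ℝⁿ, the function u ↦ uᵀRu + (Ax + Bu)ᵀK(Ax + Bu) on ℝˢ attains its global minimum at the unique point u* = −Vx, and the minimum value equals xᵀ(AᵀKA − Λ)x. -/
/-! Completing the square: with `M = R + BᵀKB` and `V = M⁻¹BᵀKA`, the cost is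
`(u + Vx)ᵀ M (u + Vx) + xᵀ(AᵀKA − Λ)x`. Since `R` is positive definite and `BᵀKB` positive
semidefinite, `M` is positive definite, so the first term vanishes at `u = −Vx` and is positive
everywhere else. -/

open Matrix

namespace Matrix

variable {α : Type*} [CommRing α] {k l m n : Type*} [Fintype k] [Fintype l] [Fintype m]
  [Fintype n]

theorem dotProduct_transpose_mul_mul_mulVec (N : Matrix m k α) (P : Matrix m l α)
    (C : Matrix l n α) (x : k → α) (y : n → α) :
    x ⬝ᵥ ((Nᵀ * P * C) *ᵥ y) = (N *ᵥ x) ⬝ᵥ (P *ᵥ (C *ᵥ y)) := by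
  rw [← mulVec_mulVec, ← mulVec_mulVec, dotProduct_mulVec, vecMul_transpose]

theorem IsSymm.dotProduct_mulVec_comm {M : Matrix n n α} (hM : M.IsSymm) (u v : n → α) :
    u ⬝ᵥ (M *ᵥ v) = v ⬝ᵥ (M *ᵥ u) := by
  rw [dotProduct_mulVec, ← mulVec_transpose, hM.eq, dotProduct_comm]

theorem IsSymm.dotProduct_mulVec_add_two_mul_dotProduct [DecidableEq n] {M : Matrix n n α}
    (hM : M.IsSymm) (hdet : IsUnit M.det) (u c : n → α) :
    u ⬝ᵥ (M *ᵥ u) + 2 * (u ⬝ᵥ c) =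
      (u + M⁻¹ *ᵥ c) ⬝ᵥ (M *ᵥ (u + M⁻¹ *ᵥ c)) - c ⬝ᵥ (M⁻¹ *ᵥ c) := by
  have hMw : M *ᵥ (M⁻¹ *ᵥ c) = c := by
    rw [mulVec_mulVec, mul_nonsing_inv _ hdet, one_mulVec]
  rw [mulVec_add, hMw, dotProduct_add, add_dotProduct, add_dotProduct,
    hM.dotProduct_mulVec_comm (M⁻¹ *ᵥ c) u, hMw, dotProduct_comm (M⁻¹ *ᵥ c) c]
  ring

theorem IsSymm.dotProduct_mulVec_add_mulVec {K : Matrix m m α} (hK : K.IsSymm)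
    (A : Matrix m k α) (B : Matrix m l α) (x : k → α) (u : l → α) :
    (A *ᵥ x + B *ᵥ u) ⬝ᵥ (K *ᵥ (A *ᵥ x + B *ᵥ u)) =
      u ⬝ᵥ ((Bᵀ * K * B) *ᵥ u) + 2 * (u ⬝ᵥ ((Bᵀ * K * A) *ᵥ x)) +
        x ⬝ᵥ ((Aᵀ * K * A) *ᵥ x) := by
  simp only [dotProduct_transpose_mul_mul_mulVec, mulVec_add, dotProduct_add, add_dotProduct]
  rw [hK.dotProduct_mulVec_comm (A *ᵥ x) (B *ᵥ u)]
  ring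

end Matrix

theorem lqr_cost_eq {α : Type*} [CommRing α] {m n s : Type*} [Fintype m] [Fintype n]
    [Fintype s] [DecidableEq s] {R : Matrix s s α} {K : Matrix n n α} {B : Matrix n s α}
    (hR : R.IsSymm) (hK : K.IsSymm) (hdet : IsUnit (R + Bᵀ * K * B).det) (A : Matrix n m α)
    (x : m → α) (u : s → α) :
    u ⬝ᵥ (R *ᵥ u) + (A *ᵥ x + B *ᵥ u) ⬝ᵥ (K *ᵥ (A *ᵥ x + B *ᵥ u)) =
      (u + ((R + Bᵀ * K * B)⁻¹ * (Bᵀ * K * A)) *ᵥ x) ⬝ᵥ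
          ((R + Bᵀ * K * B) *ᵥ (u + ((R + Bᵀ * K * B)⁻¹ * (Bᵀ * K * A)) *ᵥ x)) +
        x ⬝ᵥ ((Aᵀ * K * A - Aᵀ * K * B * (R + Bᵀ * K * B)⁻¹ * (Bᵀ * K * A)) *ᵥ x) := by
  set M := R + Bᵀ * K * B
  set N := Bᵀ * K * A
  have hM : M.IsSymm := hR.add (by simp [IsSymm, Matrix.mul_assoc, hK.eq])
  have hN : Aᵀ * K * B = Nᵀ := by simp [N, transpose_mul, hK.eq, Matrix.mul_assoc]
  have hsq := hM.dotProduct_mulVec_add_two_mul_dotProduct hdet u (N *ᵥ x)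
  rw [hK.dotProduct_mulVec_add_mulVec, sub_mulVec, dotProduct_sub, hN,
    dotProduct_transpose_mul_mul_mulVec N M⁻¹ N, ← mulVec_mulVec x M⁻¹ N]
  have hsplit : u ⬝ᵥ (M *ᵥ u) = u ⬝ᵥ (R *ᵥ u) + u ⬝ᵥ ((Bᵀ * K * B) *ᵥ u) := by
    rw [add_mulVec, dotProduct_add]
  linear_combination hsq - hsplit

/-- Per-stage LQR minimization: with `V = (R + BᵀKB)⁻¹BᵀKA` and
`Λ = AᵀKB(R + BᵀKB)⁻¹BᵀKA`, for every `x ∈ ℝⁿ` the map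
`u ↦ uᵀRu + (Ax + Bu)ᵀK(Ax + Bu)` attains its global minimum at the unique point
`u⋆ = −Vx`, with minimum value `xᵀ(AᵀKA − Λ)x`. -/
theorem lqr_per_stage_min {n s : ℕ}
    (R : Matrix (Fin s) (Fin s) ℝ) (K A : Matrix (Fin n) (Fin n) ℝ)
    (B : Matrix (Fin n) (Fin s) ℝ)
    (hR : R.PosDef) (hK : K.PosSemidef) :
    ∀ x : Fin n → ℝ,
      letI f : (Fin s → ℝ) → ℝ := fun u =>
        u ⬝ᵥ (R *ᵥ u) + (A *ᵥ x + B *ᵥ u) ⬝ᵥ (K *ᵥ (A *ᵥ x + B *ᵥ u))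
      letI ustar : Fin s → ℝ := -(((R + Bᵀ * K * B)⁻¹ * (Bᵀ * K * A)) *ᵥ x)
      f ustar = x ⬝ᵥ ((Aᵀ * K * A - Aᵀ * K * B * (R + Bᵀ * K * B)⁻¹ * (Bᵀ * K * A)) *ᵥ x)
        ∧ ∀ u : Fin s → ℝ, u ≠ ustar → f ustar < f u := by
  intro x
  have hBKB : (Bᵀ * K * B).PosSemidef := by
    simpa only [conjTranspose_eq_transpose_of_trivial] using hK.conjTranspose_mul_mul_same B
  have hM := hR.add_posSemidef hBKB
  have hcost := lqr_cost_eq (isHermitian_iff_isSymm.mp hR.isHermitian)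
    (isHermitian_iff_isSymm.mp hK.isHermitian) ((isUnit_iff_isUnit_det _).mp hM.isUnit) A x
  simp only [hcost, neg_add_cancel, zero_dotProduct, zero_add, true_and]
  intro u hu
  have hpos := hM.dotProduct_mulVec_pos (x := u + ((R + Bᵀ * K * B)⁻¹ * (Bᵀ * K * A)) *ᵥ x)
    (by rwa [Ne, add_eq_zero_iff_eq_neg])
  simpa only [star_trivial, lt_add_iff_pos_left] using hpos
end

section
/- Let R be an s×s real symmetric positive definite matrix, K an n×n real symmetric positive semidefinite matrix, A an n×n real matrix and B an n×s real matrix, and set Λ = AᵀKB(R + BᵀKB)⁻¹BᵀKA. Then both Λ and AᵀKA − Λ are symmetric positive semidefinite. -/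
/-!
Put `M = R + BᴴKB`. The block matrix `[[M, BᴴKA], [AᴴKB, AᴴKA]]` is `diag(R, 0) + [B A]ᴴ K [B A]`,
hence positive semidefinite, and `AᴴKA − Λ` is its Schur complement with respect to the positive
definite block `M`. `Λ = (BᴴKA)ᴴ M⁻¹ (BᴴKA)` is a congruence of `M⁻¹`.
-/

open Matrix

namespace Matrix

theorem IsHermitian.conjTranspose_conjTranspose_mul_mul {α m n p : Type*} [Semiring α]
    [StarRing α] [Fintype n] {K : Matrix n n α} (hK : K.IsHermitian)
    (A : Matrix n p α) (B : Matrix n m α) : (Bᴴ * K * A)ᴴ = Aᴴ * K * B := by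
  rw [conjTranspose_mul, conjTranspose_mul, conjTranspose_conjTranspose, hK.eq, Matrix.mul_assoc]

section Ring

variable {𝕜 m n p : Type*} [Ring 𝕜] [PartialOrder 𝕜] [StarRing 𝕜]
  [Fintype m] [Fintype n] [Fintype p]

theorem PosSemidef.fromBlocks_zero_zero_zero [DecidableEq m] {R : Matrix m m 𝕜}
    (hR : R.PosSemidef) : (fromBlocks R 0 0 (0 : Matrix p p 𝕜)).PosSemidef := by
  have h := hR.conjTranspose_mul_mul_same (fromCols (1 : Matrix m m 𝕜) (0 : Matrix m p 𝕜))
  rwa [conjTranspose_fromCols_eq_fromRows_conjTranspose, fromRows_mul, fromRows_mul_fromCols,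
    conjTranspose_one, conjTranspose_zero, Matrix.one_mul, Matrix.zero_mul, Matrix.mul_one,
    Matrix.mul_zero, Matrix.zero_mul, Matrix.mul_zero] at h

theorem PosSemidef.fromBlocks_add_conjTranspose_mul_mul [StarOrderedRing 𝕜] [DecidableEq m]
    {R : Matrix m m 𝕜} {K : Matrix n n 𝕜} (hR : R.PosSemidef) (hK : K.PosSemidef)
    (A : Matrix n p 𝕜) (B : Matrix n m 𝕜) :
    (fromBlocks (R + Bᴴ * K * B) (Bᴴ * K * A) (Aᴴ * K * B) (Aᴴ * K * A)).PosSemidef := by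
  have h := hR.fromBlocks_zero_zero_zero.add (hK.conjTranspose_mul_mul_same (fromCols B A))
  rwa [conjTranspose_fromCols_eq_fromRows_conjTranspose, fromRows_mul, fromRows_mul_fromCols,
    fromBlocks_add, zero_add, zero_add, zero_add] at h

theorem PosDef.add_conjTranspose_mul_mul [StarOrderedRing 𝕜] {R : Matrix m m 𝕜}
    {K : Matrix n n 𝕜} (hR : R.PosDef) (hK : K.PosSemidef) (B : Matrix n m 𝕜) :
    (R + Bᴴ * K * B).PosDef :=
  hR.add_posSemidef (hK.conjTranspose_mul_mul_same B)

end Ring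

section Field

variable {𝕜 m n p : Type*} [Field 𝕜] [PartialOrder 𝕜] [StarRing 𝕜] [StarOrderedRing 𝕜]
  [Fintype m] [Fintype n] [Fintype p] [DecidableEq m]

theorem PosSemidef.sub_conjTranspose_mul_mul_inv_add_mul {R : Matrix m m 𝕜}
    {K : Matrix n n 𝕜} (hR : R.PosDef) (hK : K.PosSemidef)
    (A : Matrix n p 𝕜) (B : Matrix n m 𝕜) :
    (Aᴴ * K * A - Aᴴ * K * B * (R + Bᴴ * K * B)⁻¹ * (Bᴴ * K * A)).PosSemidef := by
  have hM := hR.add_conjTranspose_mul_mul hK B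
  have := hM.isUnit.invertible
  have hSchur := (hM.fromBlocks₁₁ (Bᴴ * K * A) (Aᴴ * K * A)).mp
  rw [hK.isHermitian.conjTranspose_conjTranspose_mul_mul] at hSchur
  exact hSchur (hR.posSemidef.fromBlocks_add_conjTranspose_mul_mul hK A B)

theorem PosSemidef.conjTranspose_mul_mul_inv_add_mul {R : Matrix m m 𝕜}
    {K : Matrix n n 𝕜} (hR : R.PosDef) (hK : K.PosSemidef)
    (A : Matrix n p 𝕜) (B : Matrix n m 𝕜) :
    (Aᴴ * K * B * (R + Bᴴ * K * B)⁻¹ * (Bᴴ * K * A)).PosSemidef := by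
  have hM := hR.add_conjTranspose_mul_mul hK B
  have h := hM.inv.posSemidef.conjTranspose_mul_mul_same (Bᴴ * K * A)
  rwa [hK.isHermitian.conjTranspose_conjTranspose_mul_mul] at h

end Field

end Matrix

/-- With `Λ = AᵀKB(R + BᵀKB)⁻¹BᵀKA`, both `Λ` and `AᵀKA − Λ` are symmetric
positive semidefinite. -/
theorem lqr_Lambda_posSemidef {n s : ℕ}
    (R : Matrix (Fin s) (Fin s) ℝ) (K A : Matrix (Fin n) (Fin n) ℝ)
    (B : Matrix (Fin n) (Fin s) ℝ)
    (hR : R.PosDef) (hK : K.PosSemidef) :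
    (Aᵀ * K * B * (R + Bᵀ * K * B)⁻¹ * (Bᵀ * K * A)).PosSemidef
      ∧ (Aᵀ * K * A - Aᵀ * K * B * (R + Bᵀ * K * B)⁻¹ * (Bᵀ * K * A)).PosSemidef := by
  simp only [← conjTranspose_eq_transpose_of_trivial]
  exact ⟨.conjTranspose_mul_mul_inv_add_mul hR hK A B,
    .sub_conjTranspose_mul_mul_inv_add_mul hR hK A B⟩
end

section
/- Let N ≥ 1, and for k = 0, …, N let Qₖ be n×n real symmetric positive semidefinite matrices, and for k = 0, …, N−1 let Rₖ be s×s real symmetric positive definite matrices, Aₖ be n×n real matrices, Bₖ be n×s real matrices, and pₖ ∈ [0,1]. Define recursively K_N = Q_N and, for k = N−1 down to 0, Λₖ = AₖᵀK_{k+1}Bₖ(Rₖ + BₖᵀK_{k+1}Bₖ)⁻¹BₖᵀK_{k+1}Aₖ, Lₖ = Qₖ + AₖᵀK_{k+1}Aₖ, and Kₖ = Lₖ − pₖΛₖ. Then for every k ∈ {0, …, N}, the matrices Kₖ, and for every k ∈ {0, …, N−1} the matrices Lₖ, Λₖ, and Lₖ − Λₖ, are all symmetric positive semidefinite. -/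
/-!
`L_k − Λ_k` is `Q_k` plus the Schur complement of `R_k + BₖᵀK_{k+1}Bₖ` in the block matrix
`[[R_k, 0], [0, 0]] + Gᵀ K_{k+1} G` with `G = [Bₖ Aₖ]`, which is positive semidefinite as soon as
`K_{k+1}` is. Since `Λ_k` is a congruence of the positive definite matrix
`(R_k + BₖᵀK_{k+1}Bₖ)⁻¹`, `K_k = (L_k − Λ_k) + (1 − p_k) Λ_k` is positive semidefinite too, and a
backward induction from `K_N = Q_N` propagates this through the recursion.
-/

open Matrix

namespace Matrix

variable {l m n 𝕜 : Type*} [Field 𝕜] [StarRing 𝕜] [Fintype n]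

lemma IsHermitian.conjTranspose_mul_mul_comm {K : Matrix n n 𝕜}
    (hK : K.IsHermitian) (A : Matrix n l 𝕜) (B : Matrix n m 𝕜) :
    Aᴴ * K * B = (Bᴴ * K * A)ᴴ := by
  simp only [conjTranspose_mul, conjTranspose_conjTranspose, hK.eq, Matrix.mul_assoc]

variable [Fintype m]

noncomputable def riccatiGain [DecidableEq m] (K : Matrix n n 𝕜) (R : Matrix m m 𝕜)
    (A : Matrix n l 𝕜) (B : Matrix n m 𝕜) : Matrix l l 𝕜 :=
  Aᴴ * K * B * (R + Bᴴ * K * B)⁻¹ * (Bᴴ * K * A)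

variable [PartialOrder 𝕜] [StarOrderedRing 𝕜] [Fintype l]

variable {K : Matrix n n 𝕜} {R : Matrix m m 𝕜}

lemma PosSemidef.posDef_add_conjTranspose_mul_mul (hK : K.PosSemidef) (hR : R.PosDef)
    (B : Matrix n m 𝕜) : (R + Bᴴ * K * B).PosDef :=
  hR.add_posSemidef (hK.conjTranspose_mul_mul_same B)

variable [DecidableEq m]

lemma posSemidef_riccatiGain (hK : K.PosSemidef) (hR : R.PosDef) (A : Matrix n l 𝕜)
    (B : Matrix n m 𝕜) : (riccatiGain K R A B).PosSemidef := by
  rw [riccatiGain, hK.isHermitian.conjTranspose_mul_mul_comm A B]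
  exact (hK.posDef_add_conjTranspose_mul_mul hR B).inv.posSemidef.conjTranspose_mul_mul_same
    (Bᴴ * K * A)

lemma posSemidef_sub_riccatiGain (hK : K.PosSemidef) (hR : R.PosDef) (A : Matrix n l 𝕜)
    (B : Matrix n m 𝕜) : (Aᴴ * K * A - riccatiGain K R A B).PosSemidef := by
  have hM := hK.posDef_add_conjTranspose_mul_mul hR B
  let _ := hM.isUnit.invertible
  have hblock : fromBlocks (R + Bᴴ * K * B) (Bᴴ * K * A) (Bᴴ * K * A)ᴴ (Aᴴ * K * A)
      = (fromCols (1 : Matrix m m 𝕜) (0 : Matrix m l 𝕜))ᴴ *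
          (R * fromCols (1 : Matrix m m 𝕜) (0 : Matrix m l 𝕜))
        + (fromCols B A)ᴴ * (K * fromCols B A) := by
    rw [conjTranspose_fromCols_eq_fromRows_conjTranspose,
      conjTranspose_fromCols_eq_fromRows_conjTranspose, mul_fromCols R, mul_fromCols K,
      fromRows_mul_fromCols, fromRows_mul_fromCols, fromBlocks_add]
    simp [conjTranspose_mul, hK.isHermitian.eq, Matrix.mul_assoc]
  rw [riccatiGain, hK.isHermitian.conjTranspose_mul_mul_comm A B,
    ← PosDef.fromBlocks₁₁ _ _ hM, hblock]
  simp only [← Matrix.mul_assoc]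
  exact (hR.posSemidef.conjTranspose_mul_mul_same _).add (hK.conjTranspose_mul_mul_same _)

end Matrix

lemma Matrix.PosSemidef.sub_smul_of_le_one {n R : Type*} [Fintype n] [CommRing R]
    [PartialOrder R] [StarRing R] [StarOrderedRing R] {L Λ : Matrix n n R}
    (hLΛ : (L - Λ).PosSemidef) (hΛ : Λ.PosSemidef) {p : R} (hp : p ≤ 1) :
    (L - p • Λ).PosSemidef := by
  have hsplit : L - p • Λ = (L - Λ) + (1 - p) • Λ := by rw [sub_smul, one_smul]; abel
  rw [hsplit]
  exact hLΛ.add (hΛ.smul (sub_nonneg.mpr hp))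

theorem riccati_recursion_posSemidef_general {n s : ℕ} (N : ℕ)
    (Q : ℕ → Matrix (Fin n) (Fin n) ℝ)
    (R : ℕ → Matrix (Fin s) (Fin s) ℝ)
    (A : ℕ → Matrix (Fin n) (Fin n) ℝ)
    (B : ℕ → Matrix (Fin n) (Fin s) ℝ)
    (p : ℕ → ℝ)
    (hQ : ∀ k ≤ N, (Q k).PosSemidef)
    (hR : ∀ k < N, (R k).PosDef)
    (hp : ∀ k < N, p k ∈ Set.Icc (0 : ℝ) 1)
    (K L Λ : ℕ → Matrix (Fin n) (Fin n) ℝ)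
    (hKN : K N = Q N)
    (hΛ : ∀ k < N,
      Λ k = (A k)ᵀ * K (k + 1) * B k * (R k + (B k)ᵀ * K (k + 1) * B k)⁻¹
              * ((B k)ᵀ * K (k + 1) * A k))
    (hL : ∀ k < N, L k = Q k + (A k)ᵀ * K (k + 1) * A k)
    (hK : ∀ k < N, K k = L k - p k • Λ k) :
    (∀ k ≤ N, (K k).PosSemidef) ∧
      (∀ k < N, (L k).PosSemidef ∧ (Λ k).PosSemidef ∧ (L k - Λ k).PosSemidef) := by
  simp only [← conjTranspose_eq_transpose_of_trivial] at hΛ hL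
  have hstep : ∀ k < N, (K (k + 1)).PosSemidef →
      (L k).PosSemidef ∧ (Λ k).PosSemidef ∧ (L k - Λ k).PosSemidef := by
    intro k hk hK₁
    rw [hL k hk, hΛ k hk, ← riccatiGain, add_sub_assoc]
    exact ⟨(hQ k hk.le).add (hK₁.conjTranspose_mul_mul_same _),
      posSemidef_riccatiGain hK₁ (hR k hk) _ _,
      (hQ k hk.le).add (posSemidef_sub_riccatiGain hK₁ (hR k hk) _ _)⟩
  have hKpsd : ∀ k ≤ N, (K k).PosSemidef := by
    intro k hk
    induction hk using Nat.decreasingInduction with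
    | self => rw [hKN]; exact hQ N le_rfl
    | of_succ k hk ih =>
      obtain ⟨-, hΛk, hLΛk⟩ := hstep k hk ih
      rw [hK k hk]
      exact hLΛk.sub_smul_of_le_one hΛk (hp k hk).2
  exact ⟨hKpsd, fun k hk => hstep k hk (hKpsd (k + 1) hk)⟩

/-- Riccati-type recursion of Theorem 1: `K_N = Q_N`,
`Λ_k = AₖᵀK_{k+1}Bₖ(Rₖ + BₖᵀK_{k+1}Bₖ)⁻¹BₖᵀK_{k+1}Aₖ`, `L_k = Qₖ + AₖᵀK_{k+1}Aₖ`,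
`K_k = L_k − pₖΛ_k` with `pₖ ∈ [0,1]`.  Then all the matrices `K_k` (`0 ≤ k ≤ N`) and
`L_k`, `Λ_k`, `L_k − Λ_k` (`0 ≤ k < N`) are symmetric positive semidefinite. -/
theorem riccati_recursion_posSemidef {n s : ℕ} (N : ℕ) (hN : 1 ≤ N)
    (Q : ℕ → Matrix (Fin n) (Fin n) ℝ)
    (R : ℕ → Matrix (Fin s) (Fin s) ℝ)
    (A : ℕ → Matrix (Fin n) (Fin n) ℝ)
    (B : ℕ → Matrix (Fin n) (Fin s) ℝ)
    (p : ℕ → ℝ)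
    (hQ : ∀ k ≤ N, (Q k).PosSemidef)
    (hR : ∀ k < N, (R k).PosDef)
    (hp : ∀ k < N, p k ∈ Set.Icc (0 : ℝ) 1)
    (K L Λ : ℕ → Matrix (Fin n) (Fin n) ℝ)
    (hKN : K N = Q N)
    (hΛ : ∀ k < N,
      Λ k = (A k)ᵀ * K (k + 1) * B k * (R k + (B k)ᵀ * K (k + 1) * B k)⁻¹
              * ((B k)ᵀ * K (k + 1) * A k))
    (hL : ∀ k < N, L k = Q k + (A k)ᵀ * K (k + 1) * A k)
    (hK : ∀ k < N, K k = L k - p k • Λ k) :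
    (∀ k ≤ N, (K k).PosSemidef) ∧
      (∀ k < N, (L k).PosSemidef ∧ (Λ k).PosSemidef ∧ (L k - Λ k).PosSemidef) :=
  riccati_recursion_posSemidef_general N Q R A B p hQ hR hp K L Λ hKN hΛ hL hK
end

section
/- Let N ≥ 1, and for k = 0,…,N let Qₖ be n×n real symmetric positive semidefinite matrices; for k = 0,…,N−1 let Rₖ be s×s real symmetric positive definite matrices, Aₖ n×n real matrices, Bₖ n×s real matrices, and Wₖ n×n real symmetric positive semidefinite matrices. For p ∈ [0,1] define recursively K_N(p) = Q_N and Kₖ(p) = Qₖ + AₖᵀK_{k+1}(p)Aₖ − p·AₖᵀK_{k+1}(p)Bₖ(Rₖ + BₖᵀK_{k+1}(p)Bₖ)⁻¹BₖᵀK_{k+1}(p)Aₖ. Then for all 0 ≤ p ≤ p' ≤ 1 and every k ∈ {0,…,N}, the matrix Kₖ(p) − Kₖ(p') is positive semidefinite; consequently, for every x₀ ∈ ℝⁿ, x₀ᵀK₀(p')x₀ + Σ_{k=0}^{N−1} tr(K_{k+1}(p')Wₖ) ≤ x₀ᵀK₀(p)x₀ + Σ_{k=0}^{N−1} tr(K_{k+1}(p)Wₖ).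 -/
/-!
The Riccati step is `Q + (1 - p) AᵀMA + p (AᵀMA - AᵀMB(R + BᵀMB)⁻¹BᵀMA)`. By completing the
square, the bracket is the minimum over feedback gains `L` of the closed-loop stage cost
`(A + BL)ᵀM(A + BL) + LᵀRL`, so it is nonnegative and, as a minimum of maps monotone in `M`, monotone
in `M`; the subtracted term is nonnegative, so the step is antitone in `p`. Backward induction gives
`0 ≤ K_k(p') ≤ K_k(p)` in the Loewner order, and the costs compare because `x ↦ xᵀKx` and
`K ↦ tr(KW)` with `W ≥ 0` are monotone.
-/

open Matrix
open scoped MatrixOrder ComplexOrder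

namespace Matrix

variable {l m n : Type*}

theorem PosSemidef.isSymm {M : Matrix n n ℝ} (hM : M.PosSemidef) : M.IsSymm := by
  simpa [IsSymm, IsHermitian] using hM.isHermitian

theorem transpose_mul_mul_monotone [Fintype l] [Fintype n] (X : Matrix l n ℝ) :
    Monotone fun M : Matrix l l ℝ => Xᵀ * M * X := by
  intro M M' h
  simp only [le_iff, ← Matrix.mul_sub, ← Matrix.sub_mul, ← conjTranspose_eq_transpose_of_trivial]
  exact h.conjTranspose_mul_mul_same X

theorem transpose_mul_mul_nonneg [Fintype l] [Fintype n] {M : Matrix l l ℝ} (hM : 0 ≤ M)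
    (X : Matrix l n ℝ) : 0 ≤ Xᵀ * M * X := by
  simpa using transpose_mul_mul_monotone X hM

theorem PosDef.add_transpose_mul_mul_same [Fintype l] [Fintype m] {R : Matrix m m ℝ}
    (hR : R.PosDef) (B : Matrix l m ℝ) {M : Matrix l l ℝ} (hM : 0 ≤ M) :
    (R + Bᵀ * M * B).PosDef :=
  hR.add_posSemidef (transpose_mul_mul_nonneg hM B).posSemidef

theorem IsSymm.complete_square [Fintype m] [DecidableEq m] {S : Matrix m m ℝ} (hS : S.IsSymm)
    (hSu : IsUnit S.det) (C L : Matrix m n ℝ) :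
    Lᵀ * S * L + Cᵀ * L + Lᵀ * C = (L + S⁻¹ * C)ᵀ * S * (L + S⁻¹ * C) - Cᵀ * S⁻¹ * C := by
  simp only [transpose_add, transpose_mul, hS.inv.eq, Matrix.add_mul, Matrix.mul_add,
    Matrix.mul_assoc, mul_nonsing_inv_cancel_left, nonsing_inv_mul_cancel_left, hSu]
  abel

variable [Fintype n]

theorem dotProduct_mulVec_mono {X Y : Matrix n n ℝ} (h : X ≤ Y) (x : n → ℝ) :
    x ⬝ᵥ (X *ᵥ x) ≤ x ⬝ᵥ (Y *ᵥ x) := by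
  have := h.dotProduct_mulVec_nonneg x
  rw [star_trivial, sub_mulVec, dotProduct_sub] at this
  linarith

theorem trace_mul_nonneg {𝕜 : Type*} [RCLike 𝕜] {X Y : Matrix n n 𝕜} (hX : 0 ≤ X)
    (hY : 0 ≤ Y) : 0 ≤ (X * Y).trace := by
  classical
  obtain ⟨C, rfl⟩ := CStarAlgebra.nonneg_iff_eq_star_mul_self.mp hX
  rw [Matrix.mul_assoc, trace_mul_comm, star_eq_conjTranspose]
  exact (hY.posSemidef.mul_mul_conjTranspose_same C).trace_nonneg

theorem trace_mul_mono {X Y W : Matrix n n ℝ} (h : X ≤ Y) (hW : 0 ≤ W) :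
    (X * W).trace ≤ (Y * W).trace := by
  have := trace_mul_nonneg (sub_nonneg.mpr h) hW
  rw [Matrix.sub_mul, trace_sub] at this
  linarith

end Matrix

namespace Riccati

variable {l m n : Type*} [Fintype l] [Fintype m]
variable {A : Matrix l n ℝ} {B : Matrix l m ℝ} {R : Matrix m m ℝ} {M M' : Matrix l l ℝ}

def stageCost (A : Matrix l n ℝ) (B : Matrix l m ℝ) (R : Matrix m m ℝ) (M : Matrix l l ℝ)
    (L : Matrix m n ℝ) : Matrix n n ℝ :=
  (A + B * L)ᵀ * M * (A + B * L) + Lᵀ * R * L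

section

variable [Fintype n]

theorem stageCost_mono (L : Matrix m n ℝ) (h : M' ≤ M) :
    stageCost A B R M' L ≤ stageCost A B R M L :=
  add_le_add_left (transpose_mul_mul_monotone _ h) _

theorem stageCost_nonneg (hR : 0 ≤ R) (hM : 0 ≤ M) (L : Matrix m n ℝ) :
    0 ≤ stageCost A B R M L :=
  add_nonneg (transpose_mul_mul_nonneg hM _) (transpose_mul_mul_nonneg hR L)

end

variable [DecidableEq m]

noncomputable def gain (A : Matrix l n ℝ) (B : Matrix l m ℝ) (R : Matrix m m ℝ)
    (M : Matrix l l ℝ) : Matrix m n ℝ :=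
  -((R + Bᵀ * M * B)⁻¹ * (Bᵀ * M * A))

noncomputable def correction (A : Matrix l n ℝ) (B : Matrix l m ℝ) (R : Matrix m m ℝ)
    (M : Matrix l l ℝ) : Matrix n n ℝ :=
  Aᵀ * M * B * (R + Bᵀ * M * B)⁻¹ * (Bᵀ * M * A)

noncomputable def step (Q : Matrix n n ℝ) (A : Matrix l n ℝ) (B : Matrix l m ℝ)
    (R : Matrix m m ℝ) (p : ℝ) (M : Matrix l l ℝ) : Matrix n n ℝ :=
  Q + Aᵀ * M * A - p • correction A B R M

theorem step_eq (Q : Matrix n n ℝ) (p : ℝ) :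
    step Q A B R p M = Q + (1 - p) • (Aᵀ * M * A) + p • (Aᵀ * M * A - correction A B R M) := by
  rw [step]
  module

theorem correction_eq (hM : M.IsSymm) :
    correction A B R M = (Bᵀ * M * A)ᵀ * (R + Bᵀ * M * B)⁻¹ * (Bᵀ * M * A) := by
  simp only [correction, transpose_mul, transpose_transpose, hM.eq, Matrix.mul_assoc]

theorem stageCost_eq (hR : R.PosDef) (hM : 0 ≤ M) (L : Matrix m n ℝ) :
    stageCost A B R M L = Aᵀ * M * A - correction A B R M
      + (L - gain A B R M)ᵀ * (R + Bᵀ * M * B) * (L - gain A B R M) := by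
  have hS := hR.add_transpose_mul_mul_same B hM
  have hMsymm : Mᵀ = M := hM.posSemidef.isSymm
  have expand : stageCost A B R M L = Aᵀ * M * A
      + (Lᵀ * (R + Bᵀ * M * B) * L + (Bᵀ * M * A)ᵀ * L + Lᵀ * (Bᵀ * M * A)) := by
    simp only [stageCost, transpose_add, transpose_mul, transpose_transpose, hMsymm,
      Matrix.add_mul, Matrix.mul_add, Matrix.mul_assoc]
    abel
  rw [expand, hS.posSemidef.isSymm.complete_square hS.det_pos.ne'.isUnit, gain, sub_neg_eq_add,
    correction_eq hMsymm]
  abel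

theorem stageCost_gain (hR : R.PosDef) (hM : 0 ≤ M) :
    stageCost A B R M (gain A B R M) = Aᵀ * M * A - correction A B R M := by
  simp [stageCost_eq hR hM]

variable [Fintype n]

theorem correction_nonneg (hR : R.PosDef) (hM : 0 ≤ M) : 0 ≤ correction A B R M := by
  rw [correction_eq hM.posSemidef.isSymm]
  exact transpose_mul_mul_nonneg (hR.add_transpose_mul_mul_same B hM).inv.posSemidef.nonneg _

theorem sub_correction_le_stageCost (hR : R.PosDef) (hM : 0 ≤ M) (L : Matrix m n ℝ) :
    Aᵀ * M * A - correction A B R M ≤ stageCost A B R M L := by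
  rw [stageCost_eq hR hM]
  exact le_add_of_nonneg_right
    (transpose_mul_mul_nonneg (hR.add_transpose_mul_mul_same B hM).posSemidef.nonneg _)

theorem sub_correction_nonneg (hR : R.PosDef) (hM : 0 ≤ M) :
    0 ≤ Aᵀ * M * A - correction A B R M :=
  stageCost_gain (A := A) (B := B) hR hM ▸ stageCost_nonneg hR.posSemidef.nonneg hM _

theorem sub_correction_mono (hR : R.PosDef) (hM' : 0 ≤ M') (h : M' ≤ M) :
    Aᵀ * M' * A - correction A B R M' ≤ Aᵀ * M * A - correction A B R M :=
  calc Aᵀ * M' * A - correction A B R M'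
      ≤ stageCost A B R M' (gain A B R M) := sub_correction_le_stageCost hR hM' _
    _ ≤ stageCost A B R M (gain A B R M) := stageCost_mono _ h
    _ = Aᵀ * M * A - correction A B R M := stageCost_gain hR (hM'.trans h)

variable {Q : Matrix n n ℝ} {p p' : ℝ}

theorem step_nonneg (hQ : 0 ≤ Q) (hR : R.PosDef) (hM : 0 ≤ M) (hp₀ : 0 ≤ p) (hp₁ : p ≤ 1) :
    0 ≤ step Q A B R p M := by
  rw [step_eq]
  exact add_nonneg (add_nonneg hQ (smul_nonneg (sub_nonneg.mpr hp₁)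
    (transpose_mul_mul_nonneg hM A))) (smul_nonneg hp₀ (sub_correction_nonneg hR hM))

theorem step_mono (hR : R.PosDef) (hM' : 0 ≤ M') (h : M' ≤ M) (hp₀ : 0 ≤ p) (hp₁ : p ≤ 1) :
    step Q A B R p M' ≤ step Q A B R p M := by
  simp only [step_eq]
  exact add_le_add
    (add_le_add_right (smul_le_smul_of_nonneg_left (transpose_mul_mul_monotone A h)
      (sub_nonneg.mpr hp₁)) _)
    (smul_le_smul_of_nonneg_left (sub_correction_mono hR hM' h) hp₀)

theorem step_antitone (hR : R.PosDef) (hM : 0 ≤ M) (h : p ≤ p') :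
    step Q A B R p' M ≤ step Q A B R p M := by
  have : p • correction A B R M ≤ p' • correction A B R M := by
    rw [← sub_nonneg, ← sub_smul]
    exact smul_nonneg (sub_nonneg.mpr h) (correction_nonneg hR hM)
  exact sub_le_sub_left this _

end Riccati

theorem Riccati.backward_recursion_nonneg_le {m n : Type*} [Fintype m] [Fintype n]
    [DecidableEq m] {N : ℕ} {Q A : ℕ → Matrix n n ℝ} {B : ℕ → Matrix n m ℝ}
    {R : ℕ → Matrix m m ℝ} (hQ : ∀ k ≤ N, 0 ≤ Q k) (hR : ∀ k < N, (R k).PosDef) {p p' : ℝ}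
    (hp₀ : 0 ≤ p) (hpp' : p ≤ p') (hp'₁ : p' ≤ 1) {K K' : ℕ → Matrix n n ℝ}
    (hKN : K N = Q N) (hK'N : K' N = Q N)
    (hK : ∀ k < N, K k = step (Q k) (A k) (B k) (R k) p (K (k + 1)))
    (hK' : ∀ k < N, K' k = step (Q k) (A k) (B k) (R k) p' (K' (k + 1))) :
    ∀ k ≤ N, 0 ≤ K' k ∧ K' k ≤ K k := by
  intro k hk
  induction hk using Nat.decreasingInduction with
  | self => exact ⟨hK'N ▸ hQ N le_rfl, (hK'N.trans hKN.symm).le⟩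
  | of_succ k hk ih =>
    obtain ⟨hnonneg, hle⟩ := ih
    rw [hK k hk, hK' k hk]
    exact ⟨step_nonneg (hQ k hk.le) (hR k hk) hnonneg (hp₀.trans hpp') hp'₁,
      (step_antitone (hR k hk) hnonneg hpp').trans
        (step_mono (hR k hk) hnonneg hle hp₀ (hpp'.trans hp'₁))⟩

theorem riccati_cost_antitone_in_reliability_general {n s : ℕ} (N : ℕ)
    (Q : ℕ → Matrix (Fin n) (Fin n) ℝ)
    (R : ℕ → Matrix (Fin s) (Fin s) ℝ)
    (A : ℕ → Matrix (Fin n) (Fin n) ℝ)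
    (B : ℕ → Matrix (Fin n) (Fin s) ℝ)
    (W : ℕ → Matrix (Fin n) (Fin n) ℝ)
    (hQ : ∀ k ≤ N, (Q k).PosSemidef)
    (hR : ∀ k < N, (R k).PosDef)
    (hW : ∀ k < N, (W k).PosSemidef)
    (K : ℝ → ℕ → Matrix (Fin n) (Fin n) ℝ)
    (hKN : ∀ p ∈ Set.Icc (0 : ℝ) 1, K p N = Q N)
    (hKrec : ∀ p ∈ Set.Icc (0 : ℝ) 1, ∀ k < N,
      K p k = Q k + (A k)ᵀ * K p (k + 1) * A k
        - p • ((A k)ᵀ * K p (k + 1) * B k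
            * (R k + (B k)ᵀ * K p (k + 1) * B k)⁻¹ * ((B k)ᵀ * K p (k + 1) * A k))) :
    ∀ p p' : ℝ, 0 ≤ p → p ≤ p' → p' ≤ 1 →
      (∀ k ≤ N, (K p k - K p' k).PosSemidef) ∧
      (∀ x₀ : Fin n → ℝ,
        x₀ ⬝ᵥ (K p' 0 *ᵥ x₀) + ∑ k ∈ Finset.range N, (K p' (k + 1) * W k).trace
          ≤ x₀ ⬝ᵥ (K p 0 *ᵥ x₀) + ∑ k ∈ Finset.range N, (K p (k + 1) * W k).trace) := by
  intro p p' hp₀ hpp' hp'₁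
  have hp : p ∈ Set.Icc (0 : ℝ) 1 := ⟨hp₀, hpp'.trans hp'₁⟩
  have hp' : p' ∈ Set.Icc (0 : ℝ) 1 := ⟨hp₀.trans hpp', hp'₁⟩
  have hK := Riccati.backward_recursion_nonneg_le (fun k hk => (hQ k hk).nonneg) hR hp₀ hpp' hp'₁
    (hKN p hp) (hKN p' hp') (hKrec p hp) (hKrec p' hp')
  refine ⟨fun k hk => (hK k hk).2, fun x₀ => add_le_add ?_ ?_⟩
  · exact dotProduct_mulVec_mono (hK 0 N.zero_le).2 x₀
  · refine Finset.sum_le_sum fun k hk => ?_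
    rw [Finset.mem_range] at hk
    exact trace_mul_mono (hK (k + 1) hk).2 (hW k hk).nonneg

/-- Monotonicity of the minimum cost in the controller reliability `p`: with the
Riccati recursion `K_N(p) = Q_N`,
`K_k(p) = Qₖ + AₖᵀK_{k+1}(p)Aₖ − p·AₖᵀK_{k+1}(p)Bₖ(Rₖ + BₖᵀK_{k+1}(p)Bₖ)⁻¹BₖᵀK_{k+1}(p)Aₖ`,
for `0 ≤ p ≤ p' ≤ 1` all the matrices `K_k(p) − K_k(p')` are positive semidefinite, and
hence `x₀ᵀK₀(p')x₀ + Σ tr(K_{k+1}(p')Wₖ) ≤ x₀ᵀK₀(p)x₀ + Σ tr(K_{k+1}(p)Wₖ)`. -/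
theorem riccati_cost_antitone_in_reliability {n s : ℕ} (N : ℕ) (hN : 1 ≤ N)
    (Q : ℕ → Matrix (Fin n) (Fin n) ℝ)
    (R : ℕ → Matrix (Fin s) (Fin s) ℝ)
    (A : ℕ → Matrix (Fin n) (Fin n) ℝ)
    (B : ℕ → Matrix (Fin n) (Fin s) ℝ)
    (W : ℕ → Matrix (Fin n) (Fin n) ℝ)
    (hQ : ∀ k ≤ N, (Q k).PosSemidef)
    (hR : ∀ k < N, (R k).PosDef)
    (hW : ∀ k < N, (W k).PosSemidef)
    (K : ℝ → ℕ → Matrix (Fin n) (Fin n) ℝ)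
    (hKN : ∀ p ∈ Set.Icc (0 : ℝ) 1, K p N = Q N)
    (hKrec : ∀ p ∈ Set.Icc (0 : ℝ) 1, ∀ k < N,
      K p k = Q k + (A k)ᵀ * K p (k + 1) * A k
        - p • ((A k)ᵀ * K p (k + 1) * B k
            * (R k + (B k)ᵀ * K p (k + 1) * B k)⁻¹ * ((B k)ᵀ * K p (k + 1) * A k))) :
    ∀ p p' : ℝ, 0 ≤ p → p ≤ p' → p' ≤ 1 →
      (∀ k ≤ N, (K p k - K p' k).PosSemidef) ∧
      (∀ x₀ : Fin n → ℝ,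
        x₀ ⬝ᵥ (K p' 0 *ᵥ x₀) + ∑ k ∈ Finset.range N, (K p' (k + 1) * W k).trace
          ≤ x₀ ⬝ᵥ (K p 0 *ᵥ x₀) + ∑ k ∈ Finset.range N, (K p (k + 1) * W k).trace) :=
  riccati_cost_antitone_in_reliability_general N Q R A B W hQ hR hW K hKN hKrec
end

section
/- Let (Ω, 𝓕, ℙ) be a probability space, 𝓖 ⊆ 𝓕 a sub-σ-algebra, X : Ω → ℝⁿ a random vector with square-integrable components, X̂ = E[X | 𝓖], ε = X − X̂. Let R be an s×s real symmetric positive definite matrix, K an n×n real symmetric positive semidefinite matrix, A an n×n real matrix, B an n×s real matrix, V = (R + BᵀKB)⁻¹BᵀKA, Λ = AᵀKB(R + BᵀKB)⁻¹BᵀKA. Let w : Ω → ℝⁿ be a zero-mean random vector with covariance matrix W, independent of the σ-algebra generated by X and 𝓖. Then over all 𝓖-measurable square-integrable U : Ω → ℝˢ, the functional U ↦ E[UᵀRU + (AX + BU + w)ᵀK(AX + BU + w)] attains its minimum at U = −VX̂, with minimum value E[Xᵀ(AᵀKA − Λ)X] + E[εᵀΛε] + tr(KW). -/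
/-!
With `S = R + BᵀKB` and `S V = BᵀKA`, completing the square in the control turns the stage cost
into `(U + V X)ᵀ S (U + V X) + Xᵀ(AᵀKA - VᵀSV)X`, and the centred noise, being independent of
`(X, U)`, contributes only `tr(KW)`. Writing `U + V X = (U + V X̂) + V ε`, the cross term vanishes
because the estimation error `ε` is `L²`-orthogonal to every `𝓖`-measurable square-integrable
vector. What remains is `E[(U + V X̂)ᵀ S (U + V X̂)]` plus a quantity not depending on `U`, and
`S` is positive definite, so the minimum is attained at `U = -V X̂`.
-/

open Matrix MeasureTheory ProbabilityTheory
open scoped ENNReal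

namespace Matrix

variable {m n α : Type*} [Fintype m] [Fintype n] [CommRing α]

theorem dotProduct_mulVec_eq_transpose (M : Matrix m n α) (x : m → α) (y : n → α) :
    x ⬝ᵥ (M *ᵥ y) = y ⬝ᵥ (Mᵀ *ᵥ x) := by
  rw [dotProduct_mulVec, ← mulVec_transpose, dotProduct_comm]

theorem mulVec_dotProduct_mulVec {l : Type*} [Fintype l] (M : Matrix m n α) (N : Matrix m l α)
    (x : n → α) (y : l → α) : (M *ᵥ x) ⬝ᵥ (N *ᵥ y) = x ⬝ᵥ ((Mᵀ * N) *ᵥ y) := by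
  rw [dotProduct_comm, dotProduct_mulVec_eq_transpose, mulVec_mulVec]

theorem IsSymm.dotProduct_mulVec_comm_s12 {S : Matrix n n α} (hS : S.IsSymm) (x y : n → α) :
    x ⬝ᵥ (S *ᵥ y) = y ⬝ᵥ (S *ᵥ x) := by
  rw [dotProduct_mulVec_eq_transpose, hS.eq]

theorem IsSymm.dotProduct_mulVec_add_add {S : Matrix n n α} (hS : S.IsSymm) (x y : n → α) :
    (x + y) ⬝ᵥ (S *ᵥ (x + y)) = x ⬝ᵥ (S *ᵥ x) + 2 * (x ⬝ᵥ (S *ᵥ y)) + y ⬝ᵥ (S *ᵥ y) := by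
  rw [mulVec_add, add_dotProduct, dotProduct_add, dotProduct_add, hS.dotProduct_mulVec_comm_s12 y x]
  ring

theorem IsSymm.transpose_mul_mul {K : Matrix n n α} (hK : K.IsSymm) {l : Type*}
    (B : Matrix n l α) : (Bᵀ * K * B).IsSymm := by
  simp [IsSymm, transpose_mul, hK.eq, Matrix.mul_assoc]

theorem dotProduct_mulVec_complete_square {R : Matrix m m α} {K A : Matrix n n α}
    {B : Matrix n m α} {V : Matrix m n α} (hR : R.IsSymm) (hK : K.IsSymm)
    (hV : (R + Bᵀ * K * B) * V = Bᵀ * K * A) (u : m → α) (x : n → α) :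
    u ⬝ᵥ (R *ᵥ u) + (A *ᵥ x + B *ᵥ u) ⬝ᵥ (K *ᵥ (A *ᵥ x + B *ᵥ u))
      = (u + V *ᵥ x) ⬝ᵥ ((R + Bᵀ * K * B) *ᵥ (u + V *ᵥ x))
        + x ⬝ᵥ ((Aᵀ * K * A - Vᵀ * (R + Bᵀ * K * B) * V) *ᵥ x) := by
  rw [Matrix.mul_assoc Vᵀ, hV, hK.dotProduct_mulVec_add_add,
    (hR.add (hK.transpose_mul_mul B)).dotProduct_mulVec_add_add,
    mulVec_mulVec x _ V, hV]
  simp only [mulVec_dotProduct_mulVec, mulVec_mulVec]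
  rw [dotProduct_mulVec_eq_transpose (Aᵀ * (K * B))]
  simp only [sub_mulVec, dotProduct_sub, add_mulVec, dotProduct_add, transpose_mul,
    transpose_transpose, hK.eq, Matrix.mul_assoc]
  ring

theorem IsSymm.transpose_mul_mul_nonsing_inv_mul [DecidableEq n] {S : Matrix n n α} (hS : S.IsSymm)
    (hdet : IsUnit S.det) {l : Type*} (C : Matrix n l α) :
    (S⁻¹ * C)ᵀ * S * (S⁻¹ * C) = Cᵀ * S⁻¹ * C := by
  rw [Matrix.mul_assoc _ S, mul_nonsing_inv_cancel_left _ _ hdet, transpose_mul,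
    transpose_nonsing_inv, hS.eq, Matrix.mul_assoc]

end Matrix

section Integral

variable {Ω ι κ : Type*} [Fintype ι] [Fintype κ] {mΩ : MeasurableSpace Ω} {μ : Measure Ω}
  {f : Ω → ι → ℝ} {g : Ω → κ → ℝ}

theorem MeasureTheory.MemLp.mulVec {p : ℝ≥0∞} (M : Matrix ι κ ℝ) (hg : MemLp g p μ) :
    MemLp (fun ω => M *ᵥ g ω) p μ :=
  memLp_pi_iff.2 fun i => memLp_finsetSum _ fun j _ => (hg.eval j).const_mul (M i j)

theorem integral_dotProduct_mulVec (M : Matrix ι κ ℝ) (hf : MemLp f 2 μ) (hg : MemLp g 2 μ) :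
    ∫ ω, f ω ⬝ᵥ (M *ᵥ g ω) ∂μ = ∑ i, ∑ j, M i j * ∫ ω, f ω i * g ω j ∂μ := by
  have hfg : ∀ i j, Integrable (fun ω => M i j * (f ω i * g ω j)) μ := fun i j =>
    ((hf.eval i).integrable_mul (hg.eval j)).const_mul _
  have hpt : ∀ ω, f ω ⬝ᵥ (M *ᵥ g ω) = ∑ i, ∑ j, M i j * (f ω i * g ω j) := fun ω => by
    simp only [dotProduct, mulVec, Finset.mul_sum]
    exact Finset.sum_congr rfl fun i _ => Finset.sum_congr rfl fun j _ => by ring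
  simp_rw [hpt]
  rw [integral_finsetSum _ fun i _ => integrable_finsetSum _ fun j _ => hfg i j]
  refine Finset.sum_congr rfl fun i _ => ?_
  rw [integral_finsetSum _ fun j _ => hfg i j]
  simp_rw [integral_const_mul]

theorem integrable_dotProduct_mulVec (M : Matrix ι κ ℝ) (hf : MemLp f 2 μ) (hg : MemLp g 2 μ) :
    Integrable (fun ω => f ω ⬝ᵥ (M *ᵥ g ω)) μ :=
  integrable_finsetSum _ fun i _ => (hf.eval i).integrable_mul ((hg.mulVec M).eval i)

theorem integral_dotProduct_mulVec_eq_zero (M : Matrix ι κ ℝ) (hf : MemLp f 2 μ)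
    (hg : MemLp g 2 μ) (hfg : ∀ i j, ∫ ω, f ω i * g ω j ∂μ = 0) :
    ∫ ω, f ω ⬝ᵥ (M *ᵥ g ω) ∂μ = 0 := by
  simp [integral_dotProduct_mulVec M hf hg, hfg]

theorem integral_dotProduct_mulVec_self_eq_trace {K W : Matrix ι ι ℝ} (hf : MemLp f 2 μ)
    (hW : ∀ i j, ∫ ω, f ω i * f ω j ∂μ = W i j) :
    ∫ ω, f ω ⬝ᵥ (K *ᵥ f ω) ∂μ = (K * W).trace := by
  have hWsymm : ∀ i j, W i j = W j i := fun i j => by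
    simp_rw [← hW, mul_comm]
  simp only [integral_dotProduct_mulVec K hf hf, hW, trace, diag, mul_apply, hWsymm]

theorem Matrix.IsSymm.integral_dotProduct_mulVec_add_add {S : Matrix ι ι ℝ} (hS : S.IsSymm)
    {f g : Ω → ι → ℝ} (hf : MemLp f 2 μ) (hg : MemLp g 2 μ)
    (hfg : ∫ ω, f ω ⬝ᵥ (S *ᵥ g ω) ∂μ = 0) :
    ∫ ω, (f ω + g ω) ⬝ᵥ (S *ᵥ (f ω + g ω)) ∂μ
      = ∫ ω, f ω ⬝ᵥ (S *ᵥ f ω) ∂μ + ∫ ω, g ω ⬝ᵥ (S *ᵥ g ω) ∂μ := by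
  have hff := integrable_dotProduct_mulVec S hf hf
  have hfg' := (integrable_dotProduct_mulVec S hf hg).const_mul 2
  simp_rw [hS.dotProduct_mulVec_add_add]
  rw [integral_add (hff.fun_add hfg') (integrable_dotProduct_mulVec S hg hg),
    integral_add hff hfg', integral_const_mul, hfg]
  ring

theorem ProbabilityTheory.IndepFun.integral_dotProduct_mulVec_eq_zero (hfg : IndepFun f g μ)
    (M : Matrix ι κ ℝ) (hf : MemLp f 2 μ) (hg : MemLp g 2 μ) (hg0 : ∀ j, ∫ ω, g ω j ∂μ = 0) :
    ∫ ω, f ω ⬝ᵥ (M *ᵥ g ω) ∂μ = 0 :=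
  _root_.integral_dotProduct_mulVec_eq_zero M hf hg fun i j => by
    simpa [Function.comp_def, hg0] using
      (hfg.comp (measurable_pi_apply i) (measurable_pi_apply j)).integral_fun_mul_eq_mul_integral
        (hf.eval i).aestronglyMeasurable (hg.eval j).aestronglyMeasurable

theorem ProbabilityTheory.IndepFun.integral_dotProduct_mulVec_add_add
    {K W : Matrix ι ι ℝ} (hK : K.IsSymm) {y w : Ω → ι → ℝ} (hyw : IndepFun y w μ)
    (hy : MemLp y 2 μ) (hw : MemLp w 2 μ) (hw0 : ∀ i, ∫ ω, w ω i ∂μ = 0)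
    (hW : ∀ i j, ∫ ω, w ω i * w ω j ∂μ = W i j) :
    ∫ ω, (y ω + w ω) ⬝ᵥ (K *ᵥ (y ω + w ω)) ∂μ = ∫ ω, y ω ⬝ᵥ (K *ᵥ y ω) ∂μ + (K * W).trace := by
  rw [hK.integral_dotProduct_mulVec_add_add hy hw
      (hyw.integral_dotProduct_mulVec_eq_zero K hy hw hw0),
    integral_dotProduct_mulVec_self_eq_trace hw hW]

theorem ProbabilityTheory.indepFun_of_indep_of_measurable {β γ : Type*} [mβ : MeasurableSpace β]
    [mγ : MeasurableSpace γ] {M : MeasurableSpace Ω}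
    {f : Ω → β} {g : Ω → γ} (h : Indep (MeasurableSpace.comap g mγ) M μ) (hf : Measurable[M] f) :
    IndepFun f g μ :=
  (IndepFun_iff_Indep f g μ).2 (indep_of_indep_of_le_left h.symm hf.comap_le)

end Integral

section CondExp

variable {Ω ι κ : Type*} {m mΩ : MeasurableSpace Ω} {μ : Measure Ω}

theorem integral_mul_sub_condExp_eq_zero [IsFiniteMeasure μ] (hm : m ≤ mΩ) {f g : Ω → ℝ}
    (hg : StronglyMeasurable[m] g) (hg2 : MemLp g 2 μ) (hf : MemLp f 2 μ) :
    ∫ ω, g ω * (f ω - μ[f|m] ω) ∂μ = 0 := by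
  have hgf : Integrable (fun ω => g ω * f ω) μ := hg2.integrable_mul hf
  have hgf' : Integrable (fun ω => g ω * μ[f|m] ω) μ := hg2.integrable_mul (hf.condExp one_le_two)
  have hpull : ∫ ω, g ω * f ω ∂μ = ∫ ω, g ω * μ[f|m] ω ∂μ := by
    rw [← integral_condExp hm]
    exact integral_congr_ae
      (condExp_mul_of_stronglyMeasurable_left hg hgf (hf.integrable one_le_two))
  simp_rw [mul_sub]
  rw [integral_sub hgf hgf', hpull, sub_self]

theorem memLp_condExp_pi [Fintype ι] {p : ℝ≥0∞} (hp : 1 ≤ p) {f : Ω → ι → ℝ}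
    (hf : MemLp f p μ) :
    MemLp (fun ω i => μ[fun ω' => f ω' i|m] ω) p μ :=
  memLp_pi_iff.2 fun i => (hf.eval i).condExp hp

theorem measurable_condExp_pi {f : Ω → ι → ℝ} :
    Measurable[m] (fun ω i => μ[fun ω' => f ω' i|m] ω) :=
  @measurable_pi_lambda _ _ _ m _ _ fun _ => stronglyMeasurable_condExp.measurable

theorem integral_dotProduct_mulVec_sub_condExp_eq_zero [Fintype ι] [Fintype κ] [IsFiniteMeasure μ]
    (hm : m ≤ mΩ) (M : Matrix κ ι ℝ) {D : Ω → κ → ℝ} (hD : Measurable[m] D) (hD2 : MemLp D 2 μ)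
    {f : Ω → ι → ℝ} (hf : MemLp f 2 μ) :
    ∫ ω, D ω ⬝ᵥ (M *ᵥ (f ω - fun i => μ[fun ω' => f ω' i|m] ω)) ∂μ = 0 :=
  integral_dotProduct_mulVec_eq_zero M hD2 (hf.sub (memLp_condExp_pi one_le_two hf)) fun i j =>
    integral_mul_sub_condExp_eq_zero hm ((measurable_pi_apply i).comp hD).stronglyMeasurable
      (hD2.eval i) (hf.eval j)

theorem Matrix.IsSymm.integral_dotProduct_mulVec_add_mulVec_condExp [Fintype ι] [Fintype κ]
    [IsFiniteMeasure μ]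
    (hm : m ≤ mΩ) {S : Matrix κ κ ℝ} (hS : S.IsSymm) (V : Matrix κ ι ℝ) {U : Ω → κ → ℝ}
    (hU : Measurable[m] U) (hU2 : MemLp U 2 μ) {X : Ω → ι → ℝ} (hX : MemLp X 2 μ) :
    let Xhat : Ω → ι → ℝ := fun ω i => μ[fun ω' => X ω' i|m] ω
    ∫ ω, (U ω + V *ᵥ X ω) ⬝ᵥ (S *ᵥ (U ω + V *ᵥ X ω)) ∂μ
      = ∫ ω, (U ω + V *ᵥ Xhat ω) ⬝ᵥ (S *ᵥ (U ω + V *ᵥ Xhat ω)) ∂μ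
        + ∫ ω, (X ω - Xhat ω) ⬝ᵥ ((Vᵀ * S * V) *ᵥ (X ω - Xhat ω)) ∂μ := by
  intro Xhat
  have hXhat : Measurable[m] Xhat := measurable_condExp_pi
  have hD : Measurable[m] fun ω => U ω + V *ᵥ Xhat ω := by fun_prop
  have hD2 : MemLp (fun ω => U ω + V *ᵥ Xhat ω) 2 μ :=
    hU2.add ((memLp_condExp_pi one_le_two hX).mulVec V)
  have hsplit : ∀ ω, U ω + V *ᵥ X ω = (U ω + V *ᵥ Xhat ω) + V *ᵥ (X ω - Xhat ω) := fun ω => by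
    rw [mulVec_sub]; abel
  have he2 : MemLp (fun ω => V *ᵥ (X ω - Xhat ω)) 2 μ :=
    (hX.sub (memLp_condExp_pi one_le_two hX)).mulVec V
  simp_rw [hsplit]
  rw [hS.integral_dotProduct_mulVec_add_add hD2 he2]
  · simp only [mulVec_dotProduct_mulVec, mulVec_mulVec, Matrix.mul_assoc]
  · simp only [mulVec_mulVec]
    exact integral_dotProduct_mulVec_sub_condExp_eq_zero hm (S * V) hD hD2 hX

end CondExp

theorem integral_cost_eq {Ω ι κ : Type*} [Fintype ι] [Fintype κ] {m mΩ : MeasurableSpace Ω}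
    {μ : Measure Ω} [IsFiniteMeasure μ] (hm : m ≤ mΩ) {R : Matrix κ κ ℝ} {K A W : Matrix ι ι ℝ}
    {B : Matrix ι κ ℝ} {V : Matrix κ ι ℝ} (hR : R.IsSymm) (hK : K.IsSymm)
    (hV : (R + Bᵀ * K * B) * V = Bᵀ * K * A) {X w : Ω → ι → ℝ} (hX : MemLp X 2 μ)
    (hw : MemLp w 2 μ) (hw0 : ∀ i, ∫ ω, w ω i ∂μ = 0)
    (hW : ∀ i j, ∫ ω, w ω i * w ω j ∂μ = W i j)
    (hindep : Indep (MeasurableSpace.comap w inferInstance)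
      (MeasurableSpace.comap X inferInstance ⊔ m) μ)
    {U : Ω → κ → ℝ} (hU : Measurable[m] U) (hU2 : MemLp U 2 μ) :
    let Xhat : Ω → ι → ℝ := fun ω i => μ[fun ω' => X ω' i|m] ω
    ∫ ω, (U ω ⬝ᵥ (R *ᵥ U ω)
        + (A *ᵥ X ω + B *ᵥ U ω + w ω) ⬝ᵥ (K *ᵥ (A *ᵥ X ω + B *ᵥ U ω + w ω))) ∂μ
      = ∫ ω, (U ω + V *ᵥ Xhat ω) ⬝ᵥ ((R + Bᵀ * K * B) *ᵥ (U ω + V *ᵥ Xhat ω)) ∂μ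
        + (∫ ω, X ω ⬝ᵥ ((Aᵀ * K * A - Vᵀ * (R + Bᵀ * K * B) * V) *ᵥ X ω) ∂μ
          + ∫ ω, (X ω - Xhat ω) ⬝ᵥ ((Vᵀ * (R + Bᵀ * K * B) * V) *ᵥ (X ω - Xhat ω)) ∂μ
          + (K * W).trace) := by
  have hy : MemLp (fun ω => A *ᵥ X ω + B *ᵥ U ω) 2 μ := (hX.mulVec A).add (hU2.mulVec B)
  have hyw : MemLp (fun ω => A *ᵥ X ω + B *ᵥ U ω + w ω) 2 μ := hy.add hw
  have hUV : MemLp (fun ω => U ω + V *ᵥ X ω) 2 μ := hU2.add (hX.mulVec V)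
  have hindepFun : IndepFun (fun ω => A *ᵥ X ω + B *ᵥ U ω) w μ := by
    refine indepFun_of_indep_of_measurable hindep ?_
    have : Measurable[MeasurableSpace.comap X inferInstance ⊔ m] X :=
      Measurable.of_comap_le le_sup_left
    have : Measurable[MeasurableSpace.comap X inferInstance ⊔ m] U := hU.mono le_sup_right le_rfl
    fun_prop
  calc _ = ∫ ω, (U ω ⬝ᵥ (R *ᵥ U ω) + (A *ᵥ X ω + B *ᵥ U ω) ⬝ᵥ (K *ᵥ (A *ᵥ X ω + B *ᵥ U ω))) ∂μ
          + (K * W).trace := by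
        rw [integral_add (integrable_dotProduct_mulVec R hU2 hU2)
            (integrable_dotProduct_mulVec K hyw hyw),
          hindepFun.integral_dotProduct_mulVec_add_add hK hy hw hw0 hW,
          integral_add (integrable_dotProduct_mulVec R hU2 hU2)
            (integrable_dotProduct_mulVec K hy hy), add_assoc]
    _ = ∫ ω, ((U ω + V *ᵥ X ω) ⬝ᵥ ((R + Bᵀ * K * B) *ᵥ (U ω + V *ᵥ X ω))
          + X ω ⬝ᵥ ((Aᵀ * K * A - Vᵀ * (R + Bᵀ * K * B) * V) *ᵥ X ω)) ∂μ + (K * W).trace := by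
        simp_rw [dotProduct_mulVec_complete_square hR hK hV]
    _ = _ := by
        rw [integral_add (integrable_dotProduct_mulVec _ hUV hUV)
            (integrable_dotProduct_mulVec _ hX hX),
          (hR.add (hK.transpose_mul_mul B)).integral_dotProduct_mulVec_add_mulVec_condExp hm V hU
            hU2 hX]
        ring

/-- One-step Bellman minimization with partial state information: over all
`𝓖`-measurable square-integrable controls `U`, the functional
`U ↦ E[UᵀRU + (AX + BU + w)ᵀK(AX + BU + w)]` attains its minimum at `U = −V X̂`, with
minimum value `E[Xᵀ(AᵀKA − Λ)X] + E[εᵀΛε] + tr(KW)`, where `w` is a zero-mean noise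
with covariance `W` independent of the σ-algebra generated by `X` and `𝓖`. -/
theorem certainty_equivalence_min_with_noise {n s : ℕ}
    {Ω : Type*} {mΩ : MeasurableSpace Ω} (μ : Measure Ω) [IsProbabilityMeasure μ]
    (G : MeasurableSpace Ω) (hG : G ≤ mΩ)
    (X : Ω → Fin n → ℝ)
    (hX : ∀ i, MemLp (fun ω => X ω i) 2 μ)
    (R : Matrix (Fin s) (Fin s) ℝ) (K A : Matrix (Fin n) (Fin n) ℝ)
    (B : Matrix (Fin n) (Fin s) ℝ)
    (hR : R.PosDef) (hK : K.PosSemidef)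
    (w : Ω → Fin n → ℝ) (W : Matrix (Fin n) (Fin n) ℝ)
    (hwL2 : ∀ i, MemLp (fun ω => w ω i) 2 μ)
    (hwmean : ∀ i, ∫ ω, w ω i ∂μ = 0)
    (hwcov : ∀ i j, ∫ ω, w ω i * w ω j ∂μ = W i j)
    (hindep : Indep (MeasurableSpace.comap w inferInstance)
        ((MeasurableSpace.comap X inferInstance) ⊔ G) μ) :
    letI V : Matrix (Fin s) (Fin n) ℝ := (R + Bᵀ * K * B)⁻¹ * (Bᵀ * K * A)
    letI Λ : Matrix (Fin n) (Fin n) ℝ := Aᵀ * K * B * (R + Bᵀ * K * B)⁻¹ * (Bᵀ * K * A)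
    letI Xhat : Ω → Fin n → ℝ := fun ω i => (μ[fun ω' => X ω' i|G]) ω
    letI ε : Ω → Fin n → ℝ := fun ω => X ω - Xhat ω
    letI F : (Ω → Fin s → ℝ) → ℝ := fun U =>
      ∫ ω, (U ω ⬝ᵥ (R *ᵥ U ω)
        + (A *ᵥ X ω + B *ᵥ U ω + w ω) ⬝ᵥ (K *ᵥ (A *ᵥ X ω + B *ᵥ U ω + w ω))) ∂μ
    letI Ustar : Ω → Fin s → ℝ := fun ω => -(V *ᵥ Xhat ω)
    (∀ U : Ω → Fin s → ℝ, Measurable[G] U → (∀ i, MemLp (fun ω => U ω i) 2 μ) →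
        F Ustar ≤ F U)
      ∧ F Ustar = ∫ ω, X ω ⬝ᵥ ((Aᵀ * K * A - Λ) *ᵥ X ω) ∂μ
          + ∫ ω, ε ω ⬝ᵥ (Λ *ᵥ ε ω) ∂μ + (K * W).trace := by
  beta_reduce
  have hS : (R + Bᵀ * K * B).PosDef :=
    hR.add_posSemidef (by simpa using hK.conjTranspose_mul_mul_same B)
  have hdet : IsUnit (R + Bᵀ * K * B).det := hS.det_pos.ne'.isUnit
  have hKs : K.IsSymm := isHermitian_iff_isSymm.1 hK.isHermitian
  have hΛ : ((R + Bᵀ * K * B)⁻¹ * (Bᵀ * K * A))ᵀ * (R + Bᵀ * K * B)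
      * ((R + Bᵀ * K * B)⁻¹ * (Bᵀ * K * A)) = Aᵀ * K * B * (R + Bᵀ * K * B)⁻¹ * (Bᵀ * K * A) := by
    rw [IsSymm.transpose_mul_mul_nonsing_inv_mul (isHermitian_iff_isSymm.1 hS.isHermitian) hdet]
    simp only [transpose_mul, transpose_transpose, hKs.eq, Matrix.mul_assoc]
  have hX2 : MemLp X 2 μ := memLp_pi_iff.2 hX
  have hF := fun U (hU : Measurable[G] U) (hU2 : MemLp U 2 μ) =>
    integral_cost_eq (A := A) hG (isHermitian_iff_isSymm.1 hR.isHermitian) hKs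
      (mul_nonsing_inv_cancel_left _ _ hdet) hX2 (memLp_pi_iff.2 hwL2) hwmean
      hwcov hindep hU hU2
  simp only [hΛ] at hF
  set V := (R + Bᵀ * K * B)⁻¹ * (Bᵀ * K * A)
  have hXhat : Measurable[G] fun ω i => μ[fun ω' => X ω' i|G] ω := measurable_condExp_pi
  have hFstar := hF (fun ω => -(V *ᵥ fun i => μ[fun ω' => X ω' i|G] ω)) (by fun_prop)
    ((memLp_condExp_pi one_le_two hX2).mulVec V).neg
  simp only [neg_add_cancel, mulVec_zero, dotProduct_zero, integral_zero, zero_add] at hFstar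
  refine ⟨fun U hU hU2 => ?_, hFstar⟩
  rw [hFstar, hF U hU (memLp_pi_iff.2 hU2)]
  exact le_add_of_nonneg_left (integral_nonneg fun ω => hS.posSemidef.dotProduct_mulVec_nonneg _)
end
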